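/- Let g₈ be the Lie algebra with complex structure J given by the (1,0)-basis equations dω¹ = 2i ω¹∧ω³ + ω³∧ω̄³, dω² = −2i ω²∧ω³, dω³ = 0. Then the (2,0)-form ω²∧ω³ is ∂-closed, ∂̄-closed, and d-exact, but it is not ∂∂̄-exact. Consequently (g₈, J) does not satisfy the ∂∂̄-lemma at the Lie algebra level. -/

import Mathlib

noncomputable section

/-- The space of invariant complex forms: the exterior algebra over the span of
`ω¹, ω², ω³, ω̄¹, ω̄², ω̄³` (indexed `0,…,5`). -/
abbrev Lambda : Type := ExteriorAlgebra ℂ (Fin 6 → ℂ)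

/-- The generators `ω¹, ω², ω³, ω̄¹, ω̄², ω̄³` as degree-one elements. -/
def w (i : Fin 6) : Lambda := ExteriorAlgebra.ι ℂ (Pi.single i 1)

/-- Antiderivation property (Leibniz rule against `1`-forms): the defining extension
property of (the bigraded pieces of) the Chevalley–Eilenberg differential. -/
def IsAntideriv (D : Lambda →ₗ[ℂ] Lambda) : Prop :=
  D 1 = 0 ∧ ∀ (v : Fin 6 → ℂ) (x : Lambda),
    D (ExteriorAlgebra.ι ℂ v * x) =
      D (ExteriorAlgebra.ι ℂ v) * x - ExteriorAlgebra.ι ℂ v * D x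

/-- The generic Hermitian form
`2F = i(r²ω¹∧ω̄¹ + s²ω²∧ω̄² + t²ω³∧ω̄³) + uω¹∧ω̄² − ūω²∧ω̄¹ + vω²∧ω̄³ − v̄ω³∧ω̄²
  + zω¹∧ω̄³ − z̄ω³∧ω̄¹`. -/
def Fherm (r s t : ℝ) (u v z : ℂ) : Lambda :=
  (1 / 2 : ℂ) •
    (Complex.I • ((r : ℂ) ^ 2 • (w 0 * w 3) + (s : ℂ) ^ 2 • (w 1 * w 4) +
        (t : ℂ) ^ 2 • (w 2 * w 5)) +
      u • (w 0 * w 4) - (starRingEnd ℂ) u • (w 1 * w 3) +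
      v • (w 1 * w 5) - (starRingEnd ℂ) v • (w 2 * w 4) +
      z • (w 0 * w 5) - (starRingEnd ℂ) z • (w 2 * w 3))

/-- Positivity constraints making `Fherm r s t u v z` a Hermitian metric. -/
def HermPos (r s t : ℝ) (u v z : ℂ) : Prop :=
  r ≠ 0 ∧ s ≠ 0 ∧ t ≠ 0 ∧
  r ^ 2 * s ^ 2 > Complex.normSq u ∧ s ^ 2 * t ^ 2 > Complex.normSq v ∧
  r ^ 2 * t ^ 2 > Complex.normSq z ∧
  r ^ 2 * s ^ 2 * t ^ 2 +
      2 * (Complex.I * (starRingEnd ℂ) u * (starRingEnd ℂ) v * z).re >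
    t ^ 2 * Complex.normSq u + r ^ 2 * Complex.normSq v + s ^ 2 * Complex.normSq z

/-! The projection `map holProj` onto `(p,0)`-forms kills the image of `∂̄`, since `∂̄` of every
generator has a barred factor. It also kills `∂` of every barred generator, so it intertwines `∂`
with `∂ ∘ map holProj`. Hence the `(2,0)`-part of a `∂∂̄`-exact form is `∂` of the `(p,0)`-part of
a `∂̄`-exact form, i.e. zero, whereas `ω² ∧ ω³` is a nonzero `(2,0)`-form. -/

namespace ExteriorAlgebra

variable {R M : Type*} [CommRing R] [AddCommGroup M] [Module R M]

theorem algHom_antideriv_eq_zero {A : Type*} [Ring A] [Algebra R A]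
    (D : ExteriorAlgebra R M →ₗ[R] ExteriorAlgebra R M) (hD1 : D 1 = 0)
    (hD : ∀ (v : M) (x : ExteriorAlgebra R M), D (ι R v * x) = D (ι R v) * x - ι R v * D x)
    (P : ExteriorAlgebra R M →ₐ[R] A) (hP : ∀ v : M, P (D (ι R v)) = 0)
    (x : ExteriorAlgebra R M) : P (D x) = 0 := by
  induction x using CliffordAlgebra.left_induction with
  | algebraMap r => rw [Algebra.algebraMap_eq_smul_one, map_smul, hD1, map_smul, map_zero,
      smul_zero]
  | add x y hx hy => rw [map_add, map_add, hx, hy, add_zero]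
  | ι_mul x v hx => rw [hD, map_sub, map_mul, map_mul, hP, hx, zero_mul, mul_zero, sub_zero]

theorem map_antideriv_map_eq (D : ExteriorAlgebra R M →ₗ[R] ExteriorAlgebra R M)
    (hD : ∀ (v : M) (x : ExteriorAlgebra R M), D (ι R v * x) = D (ι R v) * x - ι R v * D x)
    (f : M →ₗ[R] M) (hf : f ∘ₗ f = f) (hker : ∀ v : M, f v = 0 → map f (D (ι R v)) = 0)
    (x : ExteriorAlgebra R M) : map f (D x) = map f (D (map f x)) := by
  have hff : ∀ y, map f (map f y) = map f y := fun y => by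
    rw [← AlgHom.comp_apply, map_comp_map, hf]
  have hgen : ∀ v, map f (D (ι R v)) = map f (D (ι R (f v))) := fun v => by
    have hv : f (v - f v) = 0 := by
      rw [map_sub, ← LinearMap.comp_apply f f, hf, sub_self]
    calc map f (D (ι R v)) = map f (D (ι R (v - f v))) + map f (D (ι R (f v))) := by
          rw [← map_add, ← map_add, ← map_add, sub_add_cancel]
      _ = map f (D (ι R (f v))) := by rw [hker _ hv, zero_add]
  induction x using CliffordAlgebra.left_induction with
  | algebraMap r => rw [AlgHom.commutes]
  | add x y hx hy => rw [map_add, map_add, hx, hy, map_add, map_add, map_add]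
  | ι_mul x v hx =>
    change map f (D (ι R v * x)) = map f (D (map f (ι R v * x)))
    rw [map_mul (map f), map_apply_ι, hD, hD, map_sub, map_sub, map_mul, map_mul, map_mul, map_mul,
      map_apply_ι, map_apply_ι, hff, ← hx, hgen, ← LinearMap.comp_apply f f, hf]

theorem ι_mul_ι_ne_zero {K E : Type*} [Field K] [AddCommGroup E] [Module K E] {u v : E}
    (h : LinearIndependent K ![u, v]) : ι K u * ι K v ≠ 0 := by
  have hs : (Finset.univ : Finset (Fin 2)).card = 2 := by simp
  have := (exteriorPower.ιMulti_family_linearIndependent_field (n := 2) h).ne_zero ⟨_, hs⟩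
  rw [ne_eq, ← Submodule.coe_eq_zero, exteriorPower.ιMulti_family_apply_coe,
    ιMulti_family, ιMulti_apply] at this
  generalize Set.powersetCard.ofFinEmbEquiv.symm ⟨_, hs⟩ = e at this
  have h01 : e 0 < e 1 := e.lt_iff_lt.2 (by decide)
  have he0 : e 0 = 0 := by omega
  have he1 : e 1 = 1 := by omega
  simpa [List.ofFn_succ, he0, he1] using this

end ExteriorAlgebra

open ExteriorAlgebra

theorem ι_eq_sum_w (v : Fin 6 → ℂ) : ι ℂ v = ∑ i, v i • w i := by
  conv_lhs => rw [← Finset.univ_sum_single v]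
  refine (map_sum _ _ _).trans (Finset.sum_congr rfl fun i _ => ?_)
  rw [w, ← map_smul, ← Pi.single_smul', smul_eq_mul, mul_one]

theorem w_mul_self (i : Fin 6) : w i * w i = 0 := ι_sq_zero _

theorem w_mul_w_ne_zero {i j : Fin 6} (hij : i ≠ j) : w i * w j ≠ 0 := by
  refine ι_mul_ι_ne_zero (LinearIndependent.pair_iff.2 fun s t hst => ?_)
  have hi := congrFun hst i
  have hj := congrFun hst j
  simp [hij, hij.symm] at hi hj
  exact ⟨hi, hj⟩

/-- Kills the barred coordinates, so `map holProj` takes a form to its `(p,0)`-component. -/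
def holProj : (Fin 6 → ℂ) →ₗ[ℂ] (Fin 6 → ℂ) :=
  LinearMap.pi fun i => if (i : ℕ) < 3 then LinearMap.proj i else 0

theorem holProj_comp_self : holProj ∘ₗ holProj = holProj := by
  ext v i
  simp only [holProj, LinearMap.comp_apply, LinearMap.pi_apply]
  split_ifs <;> simp_all

theorem map_holProj_w (i : Fin 6) : map holProj (w i) = if (i : ℕ) < 3 then w i else 0 := by
  rw [w, map_apply_ι]
  have : holProj (Pi.single i 1) = if (i : ℕ) < 3 then Pi.single i 1 else 0 := by
    ext j
    simp only [holProj, LinearMap.pi_apply]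
    split_ifs <;> simp_all [Pi.single_apply] <;> omega
  split_ifs at this ⊢ <;> simp only [this, map_zero]

theorem ι_eq_of_holProj_eq_zero {v : Fin 6 → ℂ} (hv : holProj v = 0) :
    ι ℂ v = v 3 • w 3 + v 4 • w 4 + v 5 • w 5 := by
  have h : ∀ i : Fin 6, (i : ℕ) < 3 → v i = 0 := fun i hi => by
    simpa [holProj, hi] using congrFun hv i
  rw [ι_eq_sum_w, Fin.sum_univ_six, h 0 (by decide), h 1 (by decide), h 2 (by decide)]
  simp only [zero_smul, zero_add, add_assoc]

theorem stmt17_general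
    (Dp Db : Lambda →ₗ[ℂ] Lambda) (hDp : IsAntideriv Dp) (hDb : IsAntideriv Db)
    (hp1 : Dp (w 1) = (-(2 * Complex.I)) • (w 1 * w 2))
    (hp2 : Dp (w 2) = 0)
    (hp3 : Dp (w 3) = w 5 * w 2)
    (hp4 : Dp (w 4) = 0)
    (hp5 : Dp (w 5) = 0)
    (hb0 : Db (w 0) = w 2 * w 5)
    (hb1 : Db (w 1) = 0)
    (hb2 : Db (w 2) = 0)
    (hb3 : Db (w 3) = (-(2 * Complex.I)) • (w 3 * w 5))
    (hb4 : Db (w 4) = (2 * Complex.I) • (w 4 * w 5))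
    (hb5 : Db (w 5) = 0) :
    Dp (w 1 * w 2) = 0 ∧
    Db (w 1 * w 2) = 0 ∧
    (∃ x : Lambda, Dp x + Db x = w 1 * w 2) ∧
    ¬(∃ y : Lambda, Dp (Db y) = w 1 * w 2) := by
  refine ⟨?_, ?_, ⟨(Complex.I / 2) • w 1, ?_⟩, ?_⟩
  · rw [w, hDp.2, ← w, hp1, hp2, mul_zero, sub_zero, smul_mul_assoc, mul_assoc, w_mul_self,
      mul_zero, smul_zero]
  · rw [w, hDb.2, ← w, hb1, hb2, mul_zero, sub_zero, zero_mul]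
  · rw [map_smul, map_smul, hp1, hb1, smul_zero, add_zero, smul_smul]
    rw [show Complex.I / 2 * -(2 * Complex.I) = 1 by ring_nf; simp, one_smul]
  · rintro ⟨y, hy⟩
    have hDb_hol : ∀ x, map holProj (Db x) = 0 :=
      algHom_antideriv_eq_zero Db hDb.1 hDb.2 (map holProj) fun v => by
        simp [ι_eq_sum_w, Fin.sum_univ_six, hb0, hb1, hb2, hb3, hb4, hb5, map_holProj_w]
    have hDp_hol : ∀ x, map holProj (Dp x) = map holProj (Dp (map holProj x)) :=
      map_antideriv_map_eq Dp hDp.2 holProj holProj_comp_self fun v hv => by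
        simp [ι_eq_of_holProj_eq_zero hv, hp3, hp4, hp5, map_holProj_w]
    refine w_mul_w_ne_zero (i := 1) (j := 2) (by decide) ?_
    calc w 1 * w 2 = map holProj (Dp (Db y)) := by simp [hy, map_holProj_w]
      _ = 0 := by rw [hDp_hol, hDb_hol, map_zero, map_zero]

/-- on `(g₈, J)` with `dω¹ = 2iω¹∧ω³ + ω³∧ω̄³`, `dω² = −2iω²∧ω³`,
`dω³ = 0`, the `(2,0)`-form `ω²∧ω³` is `∂`-closed, `∂̄`-closed and `d`-exact, but not
`∂∂̄`-exact; hence the `∂∂̄`-lemma fails for `(g₈, J)`. -/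
theorem stmt17
    (Dp Db : Lambda →ₗ[ℂ] Lambda) (hDp : IsAntideriv Dp) (hDb : IsAntideriv Db)
    (hp0 : Dp (w 0) = (2 * Complex.I) • (w 0 * w 2))
    (hp1 : Dp (w 1) = (-(2 * Complex.I)) • (w 1 * w 2))
    (hp2 : Dp (w 2) = 0)
    (hp3 : Dp (w 3) = w 5 * w 2)
    (hp4 : Dp (w 4) = 0)
    (hp5 : Dp (w 5) = 0)
    (hb0 : Db (w 0) = w 2 * w 5)
    (hb1 : Db (w 1) = 0)
    (hb2 : Db (w 2) = 0)
    (hb3 : Db (w 3) = (-(2 * Complex.I)) • (w 3 * w 5))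
    (hb4 : Db (w 4) = (2 * Complex.I) • (w 4 * w 5))
    (hb5 : Db (w 5) = 0) :
    Dp (w 1 * w 2) = 0 ∧
    Db (w 1 * w 2) = 0 ∧
    (∃ x : Lambda, Dp x + Db x = w 1 * w 2) ∧
    ¬(∃ y : Lambda, Dp (Db y) = w 1 * w 2) :=
  stmt17_general Dp Db hDp hDb hp1 hp2 hp3 hp4 hp5 hb0 hb1 hb2 hb3 hb4 hb5

end
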